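/- Let G be a loop-free digraph with n vertices such that every induced subdigraph G[U] admits a weak balanced separator of size at most k. Then crank(G) ≤ R_k(n) − 1, where R_k(n) = k + R_k(⌈(n−k)/2⌉) for n > k and R_k(r₀) = r₀ for r₀ ≤ k. -/

import Mathlib

open scoped Classical

variable {V : Type*}

/-- `b` is reachable from `a` by a (possibly empty) directed path staying inside `S`. -/
def ReachIn (E : V → V → Prop) (S : Finset V) (a b : V) : Prop :=
  Relation.ReflTransGen (fun x y => x ∈ S ∧ y ∈ S ∧ E x y) a b

/-- The induced subdigraph `G[S]` is strongly connected. -/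
def StronglyConnIn (E : V → V → Prop) (S : Finset V) : Prop :=
  ∀ a ∈ S, ∀ b ∈ S, ReachIn E S a b

/-- The induced subdigraph `G[S]` contains at least one edge. -/
def HasEdgeIn (E : V → V → Prop) (S : Finset V) : Prop :=
  ∃ a ∈ S, ∃ b ∈ S, E a b

/-- `G[S]` is acyclic: every strongly connected component of `G[S]` is trivial,
equivalently there is no edge lying on a closed walk inside `S`. -/
def AcyclicIn (E : V → V → Prop) (S : Finset V) : Prop :=
  ¬ ∃ a ∈ S, ∃ b ∈ S, E a b ∧ ReachIn E S b a

open Classical in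
/-- The strongly connected component of `v` in the induced subdigraph `G[S]`. -/
noncomputable def sccOf [DecidableEq V] (E : V → V → Prop) (S : Finset V) (v : V) : Finset V :=
  S.filter (fun u => ReachIn E S v u ∧ ReachIn E S u v)

open Classical in
/-- Fuel-based auxiliary function implementing the recursive definition of cycle rank. -/
noncomputable def crankAux [DecidableEq V] (E : V → V → Prop) : ℕ → Finset V → ℕ
  | 0, _ => 0
  | n + 1, S =>
    if AcyclicIn E S then 0
    else if StronglyConnIn E S then
      1 + sInf {m | ∃ v ∈ S, crankAux E n (S.erase v) = m}
    else
      S.sup (fun v => crankAux E n (sccOf E S v))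

/-- The cycle rank of the digraph `(V, E)`. -/
noncomputable def crank [DecidableEq V] [Fintype V] (E : V → V → Prop) : ℕ :=
  crankAux E (Fintype.card V) Finset.univ


/-- Fuel-based implementation of the recurrence
`R_k(n) = k + R_k(⌈(n−k)/2⌉)` for `n > k`, `R_k(n) = n` for `n ≤ k`.
(Note `⌈(n−k)/2⌉ = (n − k + 1)/2` in natural-number arithmetic.) -/
def RrecAux (k : ℕ) : ℕ → ℕ → ℕ
  | 0, n => n
  | f + 1, n => if n ≤ k then n else k + RrecAux k f ((n - k + 1) / 2)

/-- The recurrence `R_k(n)`: for `k, n ≥ 1`, a fuel of `n` steps suffices,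
since each recursive step at least halves the argument. -/
def Rrec (k n : ℕ) : ℕ := RrecAux k n n
/-- `S` is a weak balanced separator for `U`: every strongly connected component of
`G[U ∖ S]` contains at most `⌈|U ∖ S|/2⌉` vertices. -/
def IsWeakBalSep {V : Type*} [DecidableEq V] (E : V → V → Prop) (U S : Finset V) : Prop :=
  ∀ v ∈ U \ S, (sccOf E (U \ S) v).card ≤ ((U \ S).card + 1) / 2

/-!
Let `T` be a weak balanced separator of `G[S]` and `t = |S ∩ T| ≤ k`. Deleting the vertices of `T`
one at a time from the strongly connected piece containing them costs one unit of cycle rank each,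
and a strongly connected piece avoiding `T` lies inside a strongly connected component of
`G[S ∖ T]`, so it has at most `h = ⌈(|S| - t)/2⌉ < |S|` vertices. By induction on `|S|` this gives
`crank G[S] ≤ t + (R_k(h) - 1) ≤ R_k(|S|) - 1`, the last step because `R_k` is monotone and
`R_k(m + d) ≤ R_k(m) + d`.
-/

theorem ReachIn.mono {E : V → V → Prop} {S S' : Finset V} (h : S ⊆ S') {a b : V}
    (hab : ReachIn E S a b) : ReachIn E S' a b :=
  Relation.ReflTransGen.mono (fun _ _ hxy => ⟨h hxy.1, h hxy.2.1, hxy.2.2⟩) _ _ hab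

section Acyclic

variable (E : V → V → Prop)

theorem acyclicIn_empty : AcyclicIn E (∅ : Finset V) := by
  rintro ⟨a, ha, -⟩
  exact Finset.notMem_empty a ha

theorem acyclicIn_of_subset_singleton (hloop : ∀ v, ¬ E v v) {C : Finset V} {v : V}
    (hC : C ⊆ {v}) : AcyclicIn E C := by
  rintro ⟨a, ha, b, hb, hab, -⟩
  rw [Finset.mem_singleton.1 (hC ha), Finset.mem_singleton.1 (hC hb)] at hab
  exact hloop v hab

theorem nonempty_of_not_acyclicIn {S : Finset V} (hS : ¬ AcyclicIn E S) : S.Nonempty := by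
  rw [Finset.nonempty_iff_ne_empty]
  rintro rfl
  exact hS (acyclicIn_empty E)

end Acyclic

section StronglyConnected

variable [DecidableEq V] (E : V → V → Prop)

theorem sccOf_subset (S : Finset V) (v : V) : sccOf E S v ⊆ S :=
  Finset.filter_subset _ _

theorem subset_sccOf {C U : Finset V} (hC : StronglyConnIn E C) (hCU : C ⊆ U) {v : V}
    (hv : v ∈ C) : C ⊆ sccOf E U v := fun u hu =>
  Finset.mem_filter.2 ⟨hCU hu, (hC v hv u hu).mono hCU, (hC u hu v hv).mono hCU⟩

theorem sccOf_ssubset {S : Finset V} (hS : ¬ StronglyConnIn E S) (v : V) : sccOf E S v ⊂ S := by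
  refine (sccOf_subset E S v).ssubset_of_ne fun h => hS fun a ha b hb => ?_
  rw [← h] at ha hb
  exact (Finset.mem_filter.1 ha).2.2.trans (Finset.mem_filter.1 hb).2.1

end StronglyConnected

section CycleRank

variable [DecidableEq V] (E : V → V → Prop)

-- The cycle rank of `G[S]`: fuel `|S|` suffices since every recursive call shrinks `S`.
noncomputable def crankIn (S : Finset V) : ℕ :=
  crankAux E S.card S

theorem crankAux_empty (f : ℕ) : crankAux E f ∅ = 0 := by
  cases f <;> simp [crankAux, acyclicIn_empty]

theorem crankAux_congr_fuel {f g : ℕ} {S : Finset V} (hf : S.card ≤ f) (hg : S.card ≤ g) :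
    crankAux E f S = crankAux E g S := by
  induction f generalizing g S with
  | zero => rw [Finset.card_eq_zero.1 (Nat.le_zero.1 hf), crankAux_empty, crankAux_empty]
  | succ f ih =>
    obtain rfl | hS := S.eq_empty_or_nonempty
    · rw [crankAux_empty, crankAux_empty]
    obtain _ | g := g
    · exact absurd hg (by simp [hS.ne_empty])
    have hsub : ∀ {C}, C ⊂ S → crankAux E f C = crankAux E g C := fun hC => by
      have := Finset.card_lt_card hC
      exact ih (by omega) (by omega)
    simp only [crankAux]
    split_ifs with _ hsc
    · rfl
    · congr 2
      ext m
      exact exists_congr fun v => and_congr_right fun hv => by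
        rw [hsub (Finset.erase_ssubset hv)]
    · exact Finset.sup_congr rfl fun v _ => hsub (sccOf_ssubset E hsc v)

theorem crank_eq_crankIn_univ [Fintype V] : crank E = crankIn E Finset.univ := by
  rw [crank, crankIn, Finset.card_univ]

theorem crankIn_of_acyclicIn {S : Finset V} (hS : AcyclicIn E S) : crankIn E S = 0 := by
  obtain rfl | hne := S.eq_empty_or_nonempty
  · exact crankAux_empty E 0
  obtain ⟨f, hf⟩ := Nat.exists_eq_add_one.2 hne.card_pos
  rw [crankIn, hf, crankAux, if_pos hS]

theorem crankIn_eq_of_not_acyclicIn {S : Finset V} (hS : ¬ AcyclicIn E S) :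
    crankIn E S = if StronglyConnIn E S then 1 + sInf {m | ∃ v ∈ S, crankIn E (S.erase v) = m}
      else S.sup fun v => crankIn E (sccOf E S v) := by
  obtain ⟨f, hf⟩ := Nat.exists_eq_add_one.2 (nonempty_of_not_acyclicIn E hS).card_pos
  have hfuel : ∀ {C}, C ⊂ S → crankAux E f C = crankIn E C := fun hC => by
    have := Finset.card_lt_card hC
    exact crankAux_congr_fuel E (by omega) le_rfl
  rw [crankIn, hf, crankAux, if_neg hS]
  split_ifs with hsc
  · congr 2
    ext m
    exact exists_congr fun v => and_congr_right fun hv => by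
      rw [hfuel (Finset.erase_ssubset hv)]
  · exact Finset.sup_congr rfl fun v _ => hfuel (sccOf_ssubset E hsc v)

theorem crankIn_le_one_add_erase {S : Finset V} (hS : StronglyConnIn E S) {v : V} (hv : v ∈ S) :
    crankIn E S ≤ 1 + crankIn E (S.erase v) := by
  by_cases hac : AcyclicIn E S
  · simp [crankIn_of_acyclicIn E hac]
  rw [crankIn_eq_of_not_acyclicIn E hac, if_pos hS]
  gcongr
  exact Nat.sInf_le ⟨v, hv, rfl⟩

theorem crankIn_le_of_forall_sccOf_le {S : Finset V} (hS : ¬ StronglyConnIn E S) {b : ℕ}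
    (hb : ∀ v ∈ S, crankIn E (sccOf E S v) ≤ b) : crankIn E S ≤ b := by
  by_cases hac : AcyclicIn E S
  · simp [crankIn_of_acyclicIn E hac]
  rw [crankIn_eq_of_not_acyclicIn E hac, if_neg hS]
  exact Finset.sup_le hb

theorem crankIn_le_card_inter_add (T : Finset V) {b : ℕ} (S : Finset V)
    (hb : ∀ C ⊆ S \ T, StronglyConnIn E C → crankIn E C ≤ b) :
    crankIn E S ≤ (S ∩ T).card + b := by
  induction S using Finset.strongInduction with
  | H S ih =>
  have hb_mono : ∀ {S'}, S' ⊆ S → ∀ C ⊆ S' \ T, StronglyConnIn E C → crankIn E C ≤ b :=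
    fun hS' C hC => hb C (hC.trans (Finset.sdiff_subset_sdiff hS' le_rfl))
  by_cases hS : StronglyConnIn E S
  · obtain hST | ⟨v, hv⟩ := (S ∩ T).eq_empty_or_nonempty
    · rw [← Finset.disjoint_iff_inter_eq_empty] at hST
      exact (hb S (Finset.sdiff_eq_self_of_disjoint hST).ge hS).trans (Nat.le_add_left _ _)
    have hvS := (Finset.mem_inter.1 hv).1
    have hcard : (S.erase v ∩ T).card + 1 = (S ∩ T).card := by
      rw [Finset.erase_inter, Finset.card_erase_add_one hv]
    have hrest := ih _ (Finset.erase_ssubset hvS) (hb_mono (Finset.erase_subset v S))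
    calc crankIn E S ≤ 1 + crankIn E (S.erase v) := crankIn_le_one_add_erase E hS hvS
      _ ≤ (S ∩ T).card + b := by omega
  · refine crankIn_le_of_forall_sccOf_le E hS fun v _ => ?_
    have hsub := sccOf_subset E S v
    calc crankIn E (sccOf E S v) ≤ (sccOf E S v ∩ T).card + b :=
          ih _ (sccOf_ssubset E hS v) (hb_mono hsub)
      _ ≤ (S ∩ T).card + b := by gcongr

theorem crankIn_le_card_sub_one (hloop : ∀ v, ¬ E v v) (S : Finset V) :
    crankIn E S ≤ S.card - 1 := by
  obtain rfl | ⟨v, hv⟩ := S.eq_empty_or_nonempty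
  · exact (crankIn_of_acyclicIn E (acyclicIn_empty E)).le
  -- with `T = S.erase v` only the vertex `v` is left, acyclic as there are no loops
  have hv_acyclic : ∀ C ⊆ S \ S.erase v, AcyclicIn E C := fun C hC =>
    acyclicIn_of_subset_singleton E hloop (hC.trans (Finset.sdiff_erase_self hv).le)
  have := crankIn_le_card_inter_add E (S.erase v) S (b := 0) fun C hC _ =>
    (crankIn_of_acyclicIn E (hv_acyclic C hC)).le
  rwa [Finset.inter_eq_right.2 (S.erase_subset v), Finset.card_erase_of_mem hv] at this

end CycleRank

section Recurrence

variable {k : ℕ}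

theorem rrecAux_congr_fuel (hk : 1 ≤ k) {f g n : ℕ} (hf : n ≤ f) (hg : n ≤ g) :
    RrecAux k f n = RrecAux k g n := by
  induction f generalizing g n with
  | zero =>
    obtain rfl : n = 0 := by omega
    cases g <;> simp [RrecAux]
  | succ f ih =>
    by_cases hnk : n ≤ k
    · cases g <;> simp [RrecAux, hnk]
    obtain ⟨g, rfl⟩ : ∃ g', g = g' + 1 := ⟨g - 1, by omega⟩
    simp only [RrecAux, if_neg hnk]
    rw [ih (g := g) (n := (n - k + 1) / 2) (by omega) (by omega)]

theorem rrec_of_le {n : ℕ} (h : n ≤ k) : Rrec k n = n := by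
  cases n <;> simp [Rrec, RrecAux, h]

theorem rrec_of_lt (hk : 1 ≤ k) {n : ℕ} (h : k < n) :
    Rrec k n = k + Rrec k ((n - k + 1) / 2) := by
  obtain ⟨m, rfl⟩ : ∃ m, n = m + 1 := ⟨n - 1, by omega⟩
  rw [Rrec, RrecAux, if_neg (by omega), Rrec]
  exact congrArg (k + ·) (rrecAux_congr_fuel hk (by omega) le_rfl)

theorem rrec_le_self (hk : 1 ≤ k) (n : ℕ) : Rrec k n ≤ n := by
  induction n using Nat.strong_induction_on with
  | _ n ih =>
    by_cases h : n ≤ k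
    · exact (rrec_of_le h).le
    · have := ih ((n - k + 1) / 2) (by omega)
      rw [rrec_of_lt hk (by omega)]
      omega

theorem rrec_mono (hk : 1 ≤ k) : Monotone (Rrec k) := by
  intro m n hmn
  induction n using Nat.strong_induction_on generalizing m with
  | _ n ih =>
    by_cases hn : n ≤ k
    · rw [rrec_of_le (hmn.trans hn), rrec_of_le hn]
      exact hmn
    by_cases hm : m ≤ k
    · rw [rrec_of_le hm, rrec_of_lt hk (not_le.1 hn)]
      omega
    rw [rrec_of_lt hk (not_le.1 hm), rrec_of_lt hk (not_le.1 hn)]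
    have := ih ((n - k + 1) / 2) (by omega) (show (m - k + 1) / 2 ≤ (n - k + 1) / 2 by omega)
    omega

theorem rrec_add_le (hk : 1 ≤ k) (m d : ℕ) : Rrec k (m + d) ≤ Rrec k m + d := by
  induction m using Nat.strong_induction_on generalizing d with
  | _ m ih =>
    by_cases hmd : m + d ≤ k
    · rw [rrec_of_le hmd, rrec_of_le (by omega)]
    by_cases hm : m ≤ k
    · have := rrec_le_self hk (m + d)
      rw [rrec_of_le hm]
      omega
    rw [rrec_of_lt hk (not_le.1 hmd), rrec_of_lt hk (not_le.1 hm)]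
    have h₁ := rrec_mono hk (show (m + d - k + 1) / 2 ≤ (m - k + 1) / 2 + d by omega)
    have h₂ := ih ((m - k + 1) / 2) (by omega) d
    omega

theorem add_rrec_le_rrec (hk : 1 ≤ k) {t s : ℕ} (ht : t ≤ k) (hts : k < t + s) :
    t + Rrec k ((s + 1) / 2) ≤ Rrec k (t + s) := by
  rw [rrec_of_lt hk hts]
  have h₁ := rrec_mono hk (show (s + 1) / 2 ≤ (t + s - k + 1) / 2 + (k - t) by omega)
  have h₂ := rrec_add_le hk ((t + s - k + 1) / 2) (k - t)
  omega

end Recurrence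

theorem crankIn_le_rrec [DecidableEq V] (E : V → V → Prop) {k : ℕ} (hk : 1 ≤ k)
    (hloop : ∀ v, ¬ E v v)
    (hsep : ∀ U : Finset V, ∃ S : Finset V, S.card ≤ k ∧ IsWeakBalSep E U S) (S : Finset V) :
    crankIn E S ≤ Rrec k S.card - 1 := by
  induction S using Finset.strongInduction with
  | H S ih =>
  by_cases hSk : S.card ≤ k
  · rw [rrec_of_le hSk]
    exact crankIn_le_card_sub_one E hloop S
  obtain ⟨T, hTk, hT⟩ := hsep S
  set h := ((S \ T).card + 1) / 2
  have ht : (S ∩ T).card ≤ k := (Finset.card_le_card Finset.inter_subset_right).trans hTk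
  have hsplit : (S ∩ T).card + (S \ T).card = S.card := Finset.card_inter_add_card_sdiff S T
  have hpieces : ∀ C ⊆ S \ T, StronglyConnIn E C → crankIn E C ≤ Rrec k h - 1 := by
    intro C hCST hC
    obtain rfl | ⟨v, hv⟩ := C.eq_empty_or_nonempty
    · simp [crankIn_of_acyclicIn E (acyclicIn_empty E)]
    have hCh : C.card ≤ h :=
      (Finset.card_le_card (subset_sccOf E hC hCST hv)).trans (hT v (hCST hv))
    have hCS : C ⊂ S := (hCST.trans Finset.sdiff_subset).ssubset_of_ne (by rintro rfl; omega)
    exact (ih C hCS).trans (Nat.sub_le_sub_right (rrec_mono hk hCh) 1)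
  have hdelete := crankIn_le_card_inter_add E T S hpieces
  have hrec : (S ∩ T).card + Rrec k h ≤ Rrec k S.card := by
    rw [← hsplit]
    exact add_rrec_le_rrec hk ht (by omega)
  have hpos : 1 ≤ Rrec k h := (rrec_of_le hk).ge.trans (rrec_mono hk (by omega : 1 ≤ h))
  omega

/-- If `G` is a loop-free digraph with `n` vertices such that every induced
subdigraph `G[U]` admits a weak balanced separator of size at most `k`, then
`crank(G) ≤ R_k(n) − 1`. -/
theorem crank_le_Rrec {V : Type*} [DecidableEq V] [Fintype V] (E : V → V → Prop) (k n : ℕ)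
    (hk : 1 ≤ k) (hn : Fintype.card V = n)
    (hloopfree : ∀ v, ¬ E v v)
    (hsep : ∀ U : Finset V, ∃ S : Finset V, S.card ≤ k ∧ IsWeakBalSep E U S) :
    crank E ≤ Rrec k n - 1 := by
  rw [crank_eq_crankIn_univ, ← hn, ← Finset.card_univ]
  exact crankIn_le_rrec E hk hloopfree hsep Finset.univ
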